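/- Two states of a finite Kripke structure are divergence-blind stuttering equivalent if and only if they belong to the same block of the coarsest partition that (1) refines the partition induced by the labelling and (2) is stable with respect to itself, where stability means: for any two blocks B, B′, if some state of B has a transition into B′ then every state of B has a path of transitions within B ending in a transition into B′ (or B = B′). -/
import Mathlib


/-- A finite Kripke structure. -/
structure Kripke (V : Type*) (AP : Type*) [Fintype V] where
  trans : V → V → Prop
  total : ∀ s, ∃ t, trans s t
  label : V → Set AP

/-- A divergence-blind stuttering bisimulation. -/
def IsDbsBisim {V : Type*} {AP : Type*} [Fintype V] (K : Kripke V AP)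
    (R : V → V → Prop) : Prop :=
  Symmetric R ∧
    ∀ s t, R s t → ∀ s', K.trans s s' →
      ((K.label s = K.label t ∧ R s' t) ∨
        ∃ (k : ℕ) (c : ℕ → V), c 0 = t ∧
          (∀ i < k, K.trans (c i) (c (i + 1))) ∧
          (∀ i ≤ k, K.label (c i) = K.label s ∧ R s (c i)) ∧
          ∃ t', K.trans (c k) t' ∧ R s' t')

/-- Divergence-blind stuttering equivalence. -/
def dbsEquiv {V : Type*} {AP : Type*} [Fintype V] (K : Kripke V AP)
    (s t : V) : Prop :=
  ∃ R, IsDbsBisim K R ∧ R s t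

/-- A partition (given as a setoid) refines the partition induced by the
labelling: equivalent states carry the same label. -/
def RefinesLabelling {V : Type*} {AP : Type*} [Fintype V] (K : Kripke V AP)
    (P : Setoid V) : Prop :=
  ∀ s t, P.r s t → K.label s = K.label t

/-- Stability of a partition with respect to itself: if some state `s` of a
block has a transition into the block of `u`, then every state `t` of the block
of `s` has a path of transitions within its block ending in a transition into
the block of `u` — unless the two blocks coincide. -/
def StablePartition {V : Type*} {AP : Type*} [Fintype V] (K : Kripke V AP)
    (P : Setoid V) : Prop :=
  ∀ s t u, P.r s t → K.trans s u →
    (P.r s u ∨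
      ∃ t', Relation.ReflTransGen (fun a b => K.trans a b ∧ P.r a b) t t' ∧
        ∃ u', K.trans t' u' ∧ P.r u u')

section Aux

variable {V : Type*} {AP : Type*} [Fintype V] (K : Kripke V AP)

lemma dbs_label_eq {R : V → V → Prop} (hR : IsDbsBisim K R) {s t : V}
    (h : R s t) : K.label s = K.label t := by
  obtain ⟨s', hs'⟩ := K.total s
  rcases hR.2 s t h s' hs' with ⟨h1, _⟩ | ⟨k, c, hc0, _, hlab, _⟩
  · exact h1
  · have := (hlab 0 (Nat.zero_le _)).1
    rw [hc0] at this; exact this.symm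

lemma dbs_refl (s : V) : dbsEquiv K s s := by
  refine ⟨Eq, ⟨fun a b h => h.symm, ?_⟩, rfl⟩
  rintro s t rfl s' hs'
  right
  exact ⟨0, fun _ => s, rfl, fun i hi => absurd hi (Nat.not_lt_zero i),
    fun i _ => ⟨rfl, rfl⟩, s', hs', rfl⟩

lemma dbs_symm {s t : V} (h : dbsEquiv K s t) : dbsEquiv K t s := by
  obtain ⟨R, hR, hst⟩ := h; exact ⟨R, hR, hR.1 hst⟩

lemma dbs_isBisim : IsDbsBisim K (dbsEquiv K) := by
  constructor
  · exact fun a b => dbs_symm K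
  · rintro s t ⟨R, hR, hst⟩ s' hs'
    rcases hR.2 s t hst s' hs' with ⟨h1, h2⟩ | ⟨k, c, hc0, hstep, hmem, t', ht', hR'⟩
    · exact Or.inl ⟨h1, R, hR, h2⟩
    · exact Or.inr ⟨k, c, hc0, hstep,
        fun i hi => ⟨(hmem i hi).1, R, hR, (hmem i hi).2⟩, t', ht', R, hR, hR'⟩

lemma comp_label {a x : V} (h : ∃ m, dbsEquiv K a m ∧ dbsEquiv K m x) :
    K.label a = K.label x := by
  obtain ⟨m, h1, h2⟩ := h
  exact (dbs_label_eq K (dbs_isBisim K) h1).trans (dbs_label_eq K (dbs_isBisim K) h2)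

/-- Chain simulation: a chain of transitions all dbs-equivalent to `a`, starting
at a state equivalent to `e`, can be matched from `e`. -/
lemma dbs_sim {a : V} :
    ∀ (k : ℕ) (c : ℕ → V), (∀ i < k, K.trans (c i) (c (i+1))) →
      (∀ i ≤ k, dbsEquiv K a (c i)) → ∀ e, dbsEquiv K (c 0) e →
      ∃ (n : ℕ) (d : ℕ → V), d 0 = e ∧ (∀ i < n, K.trans (d i) (d (i+1))) ∧
        (∀ i ≤ n, ∃ m, dbsEquiv K a m ∧ dbsEquiv K m (d i)) ∧
        dbsEquiv K (c k) (d n) := by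
  intro k
  induction k with
  | zero =>
    intro c _ hmem e he
    exact ⟨0, fun _ => e, rfl, fun i hi => absurd hi (Nat.not_lt_zero i),
      fun i _ => ⟨c 0, hmem 0 le_rfl, he⟩, he⟩
  | succ k ih =>
    intro c hstep hmem e he
    have h01 : K.trans (c 0) (c 1) := hstep 0 (Nat.succ_pos k)
    rcases (dbs_isBisim K).2 (c 0) e he (c 1) h01 with ⟨_, h2⟩ |
        ⟨m, f, hf0, hfstep, hfmem, e', he', hce'⟩
    · exact ih (fun i => c (i+1)) (fun i hi => hstep (i+1) (by omega))
        (fun i hi => hmem (i+1) (by omega)) e h2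
    · obtain ⟨n, d, hd0, hdstep, hdmem, hdfin⟩ := ih (fun i => c (i+1))
        (fun i hi => hstep (i+1) (by omega))
        (fun i hi => hmem (i+1) (by omega)) e' hce'
      refine ⟨m + 1 + n, fun i => if i ≤ m then f i else d (i - (m+1)),
        ?_, ?_, ?_, ?_⟩
      · simp [Nat.zero_le, hf0]
      · intro i hi
        rcases Nat.lt_trichotomy i m with h | h | h
        · have e1 : i ≤ m := le_of_lt h
          have e2 : i + 1 ≤ m := h
          simp only [if_pos e1, if_pos e2]
          exact hfstep i h
        · subst h
          have e1 : i ≤ i := le_rfl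
          have e2 : ¬ (i + 1 ≤ i) := by omega
          simp only [if_pos e1, if_neg e2]
          have : i + 1 - (i + 1) = 0 := by omega
          rw [this, hd0]
          exact he'
        · have e1 : ¬ (i ≤ m) := by omega
          have e2 : ¬ (i + 1 ≤ m) := by omega
          simp only [if_neg e1, if_neg e2]
          have : i + 1 - (m + 1) = (i - (m+1)) + 1 := by omega
          rw [this]
          exact hdstep (i - (m+1)) (by omega)
      · intro i hi
        by_cases h : i ≤ m
        · simp only [if_pos h]
          exact ⟨c 0, hmem 0 (Nat.zero_le _), (hfmem i h).2⟩
        · simp only [if_neg h]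
          exact hdmem (i - (m+1)) (by omega)
      · have e1 : ¬ (m + 1 + n ≤ m) := by omega
        simp only [if_neg e1]
        have : m + 1 + n - (m + 1) = n := by omega
        rw [this]
        exact hdfin

lemma dbs_comp_bisim :
    IsDbsBisim K (fun a b => ∃ m, dbsEquiv K a m ∧ dbsEquiv K m b) := by
  constructor
  · rintro a b ⟨m, h1, h2⟩; exact ⟨m, dbs_symm K h2, dbs_symm K h1⟩
  · rintro s t ⟨m, hsm, hmt⟩ s' hs'
    rcases (dbs_isBisim K).2 s m hsm s' hs' with ⟨hl, h2⟩ |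
        ⟨k, c, hc0, hstep, hmem, t1, ht1, ht1'⟩
    · exact Or.inl ⟨hl.trans (dbs_label_eq K (dbs_isBisim K) hmt), m, h2, hmt⟩
    · have hc0t : dbsEquiv K (c 0) t := hc0 ▸ hmt
      obtain ⟨n, d, hd0, hdstep, hdmem, hdfin⟩ :=
        dbs_sim K k c hstep (fun i hi => (hmem i hi).2) t hc0t
      rcases (dbs_isBisim K).2 (c k) (d n) hdfin t1 ht1 with ⟨hlA, hA⟩ |
          ⟨p, g, hg0, hgstep, hgmem, w, hw, hw'⟩
      · by_cases hn : n = 0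
        · subst hn
          left
          refine ⟨?_, t1, ht1', hd0 ▸ hA⟩
          have := comp_label K (hdmem 0 le_rfl)
          rw [hd0] at this; exact this
        · right
          refine ⟨n - 1, d, hd0, fun i hi => hdstep i (by omega),
            fun i hi => ⟨(comp_label K (hdmem i (by omega))).symm, hdmem i (by omega)⟩,
            d ((n-1)+1), hdstep (n-1) (by omega), ?_⟩
          have hn1 : n - 1 + 1 = n := by omega
          rw [hn1]
          exact ⟨t1, ht1', hA⟩
      · right
        refine ⟨n + p, fun i => if i < n then d i else g (i - n), ?_, ?_, ?_,
          w, ?_, t1, ht1', hw'⟩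
        · by_cases hn : 0 < n
          · simp only [if_pos hn]; exact hd0
          · have : n = 0 := by omega
            subst this
            simp only [Nat.lt_irrefl, if_neg]
            rw [Nat.sub_zero, hg0]; exact hd0
        · intro i hi
          rcases Nat.lt_trichotomy (i+1) n with h | h | h
          · have e1 : i < n := by omega
            simp only [if_pos e1, if_pos h]
            exact hdstep i (by omega)
          · have e1 : i < n := by omega
            simp only [if_pos e1, if_neg (lt_irrefl n), h]
            have : n - n = 0 := by omega
            rw [this, hg0, ← h]
            exact hdstep i (by omega)
          · have e1 : ¬ (i < n) := by omega
            have e2 : ¬ (i + 1 < n) := by omega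
            simp only [if_neg e1, if_neg e2]
            have : i + 1 - n = (i - n) + 1 := by omega
            rw [this]
            exact hgstep (i - n) (by omega)
        · intro i hi
          by_cases h : i < n
          · simp only [if_pos h]
            exact ⟨(comp_label K (hdmem i (by omega))).symm, hdmem i (by omega)⟩
          · simp only [if_neg h]
            have hmemg : ∃ m, dbsEquiv K s m ∧ dbsEquiv K m (g (i - n)) :=
              ⟨c k, (hmem k le_rfl).2, (hgmem (i - n) (by omega)).2⟩
            exact ⟨(comp_label K hmemg).symm, hmemg⟩
        · have e1 : ¬ (n + p < n) := by omega
          simp only [if_neg e1]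
          have : n + p - n = p := by omega
          rw [this]
          exact hw

lemma dbs_trans {s t u : V} (h1 : dbsEquiv K s t) (h2 : dbsEquiv K t u) :
    dbsEquiv K s u :=
  ⟨fun a b => ∃ m, dbsEquiv K a m ∧ dbsEquiv K m b, dbs_comp_bisim K, t, h1, h2⟩

/-- The setoid of divergence-blind stuttering equivalence. -/
def dbsSetoid : Setoid V :=
  ⟨dbsEquiv K, ⟨dbs_refl K, fun h => dbs_symm K h, fun h1 h2 => dbs_trans K h1 h2⟩⟩

omit [Fintype V] in
lemma rtg_of_chain {r : V → V → Prop} (k : ℕ) (c : ℕ → V)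
    (h : ∀ i < k, r (c i) (c (i+1))) :
    Relation.ReflTransGen r (c 0) (c k) := by
  induction k with
  | zero => exact Relation.ReflTransGen.refl
  | succ k ih =>
    exact Relation.ReflTransGen.tail (ih (fun i hi => h i (by omega)))
      (h k (by omega))

lemma dbs_refines : RefinesLabelling K (dbsSetoid K) :=
  fun _ _ h => dbs_label_eq K (dbs_isBisim K) h

lemma dbs_stable : StablePartition K (dbsSetoid K) := by
  intro s t u hst hsu
  rcases (dbs_isBisim K).2 s t hst u hsu with ⟨_, h2⟩ |
      ⟨k, c, hc0, hstep, hmem, t', ht', hR'⟩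
  · exact Or.inl (dbs_trans K hst (dbs_symm K h2))
  · right
    refine ⟨c k, ?_, t', ht', hR'⟩
    have := rtg_of_chain (r := fun a b => K.trans a b ∧ dbsEquiv K a b) k c
      (fun i hi => ⟨hstep i hi,
        dbs_trans K (dbs_symm K (hmem i (by omega)).2) (hmem (i+1) (by omega)).2⟩)
    rwa [hc0] at this

omit [Fintype V] in
lemma chain_of_rtg {r : V → V → Prop} {a b : V}
    (h : Relation.ReflTransGen r a b) :
    ∃ (k : ℕ) (c : ℕ → V), c 0 = a ∧ c k = b ∧ ∀ i < k, r (c i) (c (i+1)) := by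
  induction h with
  | refl => exact ⟨0, fun _ => a, rfl, rfl, fun i hi => absurd hi (Nat.not_lt_zero i)⟩
  | @tail b' c' hab hbc ih =>
    obtain ⟨k, c, h0, hk, hs⟩ := ih
    refine ⟨k + 1, fun i => if i = k + 1 then c' else c i, ?_, ?_, ?_⟩
    · simp only [if_neg (by omega : ¬ (0 = k + 1))]; exact h0
    · simp only [if_pos rfl]
      rfl
    · intro i hi
      rcases Nat.lt_or_ge i k with h | h
      · simp only [if_neg (by omega : ¬ (i = k + 1)),
          if_neg (by omega : ¬ (i + 1 = k + 1))]
        exact hs i h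
      · have : i = k := by omega
        subst this
        simp only [if_neg (by omega : ¬ (i = i + 1)), if_pos rfl]
        rw [hk]
        exact hbc

lemma P_bisim {P : Setoid V} (href : RefinesLabelling K P)
    (hstable : StablePartition K P) : IsDbsBisim K P.r := by
  constructor
  · exact fun a b h => P.symm h
  · intro s t hst s' hs'
    rcases hstable s t s' hst hs' with h | ⟨t', hrtg, u', hu', hPu⟩
    · exact Or.inl ⟨href s t hst, P.trans (P.symm h) hst⟩
    · obtain ⟨k, c, hc0, hck, hs⟩ := chain_of_rtg hrtg
      right
      have hmem : ∀ i ≤ k, P.r t (c i) := by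
        intro i
        induction i with
        | zero => intro _; rw [hc0]
        | succ i ih =>
          intro hi
          exact P.trans (ih (by omega)) (hs i (by omega)).2
      refine ⟨k, c, hc0, fun i hi => (hs i hi).1, ?_, u', hck ▸ hu', hPu⟩
      intro i hi
      have hPs : P.r s (c i) := P.trans hst (hmem i hi)
      exact ⟨(href s (c i) hPs).symm, hPs⟩

end Aux

/-- Two states of a finite Kripke structure are divergence-blind stuttering
equivalent iff they lie in the same block of the coarsest partition that refines
the labelling and is stable with respect to itself. -/
theorem stmt_15 {V : Type*} {AP : Type*} [Fintype V] (K : Kripke V AP)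
    (P : Setoid V)
    (href : RefinesLabelling K P) (hstable : StablePartition K P)
    (hcoarsest : ∀ Q : Setoid V, RefinesLabelling K Q → StablePartition K Q →
      ∀ s t, Q.r s t → P.r s t) :
    ∀ s t, dbsEquiv K s t ↔ P.r s t := by
  intro s t
  constructor
  · intro h
    exact hcoarsest (dbsSetoid K) (dbs_refines K) (dbs_stable K) s t h
  · intro h
    exact ⟨P.r, P_bisim K href hstable, h⟩
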